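/- Let α be a Mannheim curve in ℝ³ with Mannheim partner curve β, written as α(s*) = β(s*) + μ(s*) b*(s*) where b* is the binormal of the unit-speed curve β with curvature k* > 0 and torsion r*, and where the principal normal of α is parallel to b* at corresponding points. Then μ is a nonzero constant and the curvature functions of β satisfy dr*/ds* = (k*/μ)(1 + μ² (r*)²). -/

import Mathlib

open scoped RealInnerProductSpace ContDiff

/-- Cross product on ℝ³ (Euclidean space). -/
noncomputable def cross3 (u v : EuclideanSpace ℝ (Fin 3)) : EuclideanSpace ℝ (Fin 3) :=
  (EuclideanSpace.equiv (Fin 3) ℝ).symm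
    ![u 1 * v 2 - u 2 * v 1, u 2 * v 0 - u 0 * v 2, u 0 * v 1 - u 1 * v 0]

lemma cross3_apply (u v : EuclideanSpace ℝ (Fin 3)) (i : Fin 3) :
    cross3 u v i = ![u 1 * v 2 - u 2 * v 1, u 2 * v 0 - u 0 * v 2, u 0 * v 1 - u 1 * v 0] i := rfl

lemma cross3_zero_left (v : EuclideanSpace ℝ (Fin 3)) : cross3 0 v = 0 := by
  ext i; fin_cases i <;> simp [cross3_apply]

lemma cross3_zero_right (v : EuclideanSpace ℝ (Fin 3)) : cross3 v 0 = 0 := by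
  ext i; fin_cases i <;> simp [cross3_apply]

lemma double_cross (v w : EuclideanSpace ℝ (Fin 3)) :
    cross3 (cross3 v w) v = ⟪v, v⟫ • w - ⟪w, v⟫ • v := by
  ext i
  fin_cases i <;>
    simp [cross3_apply, PiLp.inner_apply, Fin.sum_univ_three, RCLike.inner_apply, EuclideanSpace.real_norm_sq_eq] <;> ring

lemma onb_inner {t n b : EuclideanSpace ℝ (Fin 3)} (h : Orthonormal ℝ ![t, n, b]) :
    ⟪t, t⟫ = 1 ∧ ⟪n, n⟫ = 1 ∧ ⟪b, b⟫ = 1 ∧ ⟪t, n⟫ = 0 ∧ ⟪t, b⟫ = 0 ∧ ⟪n, b⟫ = 0 := by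
  have h0 := h.1 0
  have h1 := h.1 1
  have h2 := h.1 2
  simp only [Matrix.cons_val_zero, Matrix.cons_val_one, Matrix.head_cons,
    Matrix.cons_val_two, Matrix.tail_cons] at h0 h1 h2
  have i01 := h.2 (show (0 : Fin 3) ≠ 1 by decide)
  have i02 := h.2 (show (0 : Fin 3) ≠ 2 by decide)
  have i12 := h.2 (show (1 : Fin 3) ≠ 2 by decide)
  simp only [Matrix.cons_val_zero, Matrix.cons_val_one, Matrix.head_cons,
    Matrix.cons_val_two, Matrix.tail_cons] at i01 i02 i12
  refine ⟨?_, ?_, ?_, i01, i02, i12⟩ <;>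
    rw [real_inner_self_eq_norm_mul_norm] <;> simp [h0, h1, h2]
/-- If α(s*) = β(s*) + μ(s*) b*(s*) is a Mannheim curve with Mannheim partner
the unit-speed curve β (the principal normal direction of α, proportional to
(α'×α'')×α', being parallel to the binormal b* of β), then μ is a nonzero constant and
dr*/ds* = (k*/μ)(1 + μ²(r*)²). -/
theorem mannheim3_partner_curvature_ode
    (β tst nst bst α : ℝ → EuclideanSpace ℝ (Fin 3))
    (kst rst μ : ℝ → ℝ)
    (hβsm : ContDiff ℝ (⊤ : ℕ∞) β) (hμsm : ContDiff ℝ (⊤ : ℕ∞) μ)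
    (hβ' : ∀ u, deriv β u = tst u)
    (htst : ∀ u, deriv tst u = kst u • nst u)
    (hnst : ∀ u, deriv nst u = (-(kst u)) • tst u + rst u • bst u)
    (hbst : ∀ u, deriv bst u = (-(rst u)) • nst u)
    (hkst : ∀ u, 0 < kst u)
    (hon : ∀ u, Orthonormal ℝ ![tst u, nst u, bst u])
    (hαdef : ∀ u, α u = β u + μ u • bst u)
    -- the principal normal direction of α is parallel to the binormal of β
    (hpar : ∀ u, ∃ c : ℝ, c ≠ 0 ∧
      cross3 (cross3 (deriv α u) (deriv (deriv α) u)) (deriv α u) = c • bst u) :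
    ∃ c : ℝ, c ≠ 0 ∧ (∀ u, μ u = c) ∧
      ∀ u, deriv rst u = (kst u / c) * (1 + c ^ 2 * (rst u) ^ 2) := by
  classical
  -- smoothness bookkeeping
  have hbS : ContDiff ℝ ∞ β := hβsm.of_le (by simp)
  have hmS : ContDiff ℝ ∞ μ := hμsm.of_le (by simp)
  have hle1 : (1 : WithTop ℕ∞) ≤ ∞ := by exact_mod_cast le_top
  have hβdiff : Differentiable ℝ β := hbS.differentiable (by simp)
  have hμdiff : Differentiable ℝ μ := hmS.differentiable (by simp)
  have htstf : deriv β = tst := funext hβ'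
  have htsm : ContDiff ℝ ∞ tst := htstf ▸ (contDiff_infty_iff_deriv.mp hbS).2
  have htdiff : Differentiable ℝ tst := htsm.differentiable (by simp)
  have hdtsm : ContDiff ℝ ∞ (deriv tst) := (contDiff_infty_iff_deriv.mp htsm).2
  have hdtdiff : Differentiable ℝ (deriv tst) := hdtsm.differentiable (by simp)
  -- orthonormal frame facts
  have hbn : ∀ u, ‖bst u‖ = 1 := fun u => by simpa using (hon u).1 2
  have hnn : ∀ u, ‖nst u‖ = 1 := fun u => by simpa using (hon u).1 1
  have hbne : ∀ u, bst u ≠ 0 := fun u h => by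
    have := hbn u; rw [h] at this; simp at this
  -- curvature as norm of tst'
  have hknorm : ∀ u, ‖deriv tst u‖ = kst u := fun u => by
    rw [htst u, norm_smul, hnn u, Real.norm_eq_abs, abs_of_pos (hkst u), mul_one]
  have hdtne : ∀ u, deriv tst u ≠ 0 := fun u h => by
    have := hknorm u; rw [h, norm_zero] at this; exact (hkst u).ne this
  -- nst is differentiable
  have hnstf : nst = fun u => ‖deriv tst u‖⁻¹ • deriv tst u := by
    funext u
    rw [hknorm u, htst u, smul_smul, inv_mul_cancel₀ (hkst u).ne', one_smul]
  have hnstdiff : Differentiable ℝ nst := by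
    rw [hnstf]
    intro u
    exact (((hdtdiff u).norm ℝ (hdtne u)).inv (by simpa [hknorm u] using (hkst u).ne')).smul
      (hdtdiff u)
  -- α is twice differentiable, from the parallelism hypothesis
  have hα_d : ∀ u, DifferentiableAt ℝ α u := by
    intro u
    by_contra h
    obtain ⟨c, hc, heq⟩ := hpar u
    rw [deriv_zero_of_not_differentiableAt h, cross3_zero_left, cross3_zero_left] at heq
    rcases smul_eq_zero.mp heq.symm with h' | h'
    · exact hc h'
    · exact hbne u h'
  have hα'_d : ∀ u, DifferentiableAt ℝ (deriv α) u := by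
    intro u
    by_contra h
    obtain ⟨c, hc, heq⟩ := hpar u
    rw [deriv_zero_of_not_differentiableAt h, cross3_zero_right, cross3_zero_left] at heq
    rcases smul_eq_zero.mp heq.symm with h' | h'
    · exact hc h'
    · exact hbne u h'
  -- wherever μ ≠ 0, its derivative vanishes
  have key1 : ∀ u, μ u ≠ 0 → deriv μ u = 0 := by
    intro u hμu
    have hev : ∀ᶠ v in nhds u, μ v ≠ 0 := (hμsm.continuous.continuousAt).eventually_ne hμu
    have hbev : bst =ᶠ[nhds u] fun v => (μ v)⁻¹ • (α v - β v) := by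
      filter_upwards [hev] with v hv
      rw [hαdef v, add_sub_cancel_left, smul_smul, inv_mul_cancel₀ hv, one_smul]
    have hbd : DifferentiableAt ℝ bst u := by
      refine DifferentiableAt.congr_of_eventuallyEq ?_ hbev
      exact ((hμdiff u).inv hμu).smul ((hα_d u).sub (hβdiff u))
    have h1 : HasDerivAt β (tst u) u := hβ' u ▸ (hβdiff u).hasDerivAt
    have h2 : HasDerivAt bst ((-(rst u)) • nst u) u := hbst u ▸ hbd.hasDerivAt
    have h3 : HasDerivAt μ (deriv μ u) u := (hμdiff u).hasDerivAt
    have hαf : α = fun v => β v + μ v • bst v := funext hαdef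
    have H : HasDerivAt α
        (tst u + (μ u • ((-(rst u)) • nst u) + deriv μ u • bst u)) u := by
      rw [hαf]; exact h1.add (h3.smul h2)
    have hda := H.deriv
    obtain ⟨c, hc, heq⟩ := hpar u
    rw [double_cross] at heq
    have h0 : ⟪c • bst u, deriv α u⟫ = 0 := by
      rw [← heq]
      simp only [inner_sub_left, real_inner_smul_left]
      ring
    rw [hda] at h0
    obtain ⟨e1, e2, e3, e4, e5, e6⟩ := onb_inner (hon u)
    have e5' : ⟪bst u, tst u⟫ = 0 := by rw [real_inner_comm]; exact e5
    have e6' : ⟪bst u, nst u⟫ = 0 := by rw [real_inner_comm]; exact e6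
    simp only [inner_add_right, real_inner_smul_left, real_inner_smul_right,
      e3, e5', e6', mul_zero, zero_add, mul_one, zero_mul, mul_neg, neg_zero, add_zero] at h0
    rcases mul_eq_zero.mp (by linarith : c * deriv μ u = 0) with h' | h'
    · exact absurd h' hc
    · exact h'
  -- hence the derivative of μ vanishes identically
  have hμ'0 : ∀ u, deriv μ u = 0 := by
    intro u
    by_cases h : μ u = 0
    · by_cases h2 : ∀ᶠ v in nhds u, μ v = 0
      · have : μ =ᶠ[nhds u] fun _ => (0 : ℝ) := h2
        rw [this.deriv_eq, deriv_const]
      · have hf : ∃ᶠ v in nhds u, μ v ≠ 0 := by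
          rwa [Filter.not_eventually] at h2
        have hf2 : ∃ᶠ v in nhds u, v ∈ {v | deriv μ v = 0} :=
          hf.mono fun v hv => key1 v hv
        have hcont : Continuous (deriv μ) := (contDiff_infty_iff_deriv.mp hmS).2.continuous
        have hcl : IsClosed {v | deriv μ v = 0} := isClosed_eq hcont continuous_const
        have := mem_closure_iff_frequently.mpr hf2
        rwa [hcl.closure_eq] at this
    · exact key1 u h
  have hconst : ∀ u, μ u = μ 0 := fun u =>
    is_const_of_deriv_eq_zero hμdiff hμ'0 u 0
  -- the constant is nonzero
  have hc0 : μ 0 ≠ 0 := by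
    intro h0
    have hαβ : α = β := by
      funext v
      rw [hαdef v, hconst v, h0, zero_smul, add_zero]
    obtain ⟨c, hc, heq⟩ := hpar 0
    have e1 : deriv α 0 = tst 0 := by rw [hαβ, hβ' 0]
    have e2 : deriv (deriv α) 0 = kst 0 • nst 0 := by rw [hαβ, htstf, htst 0]
    rw [double_cross, e1, e2] at heq
    obtain ⟨f1, f2, f3, f4, f5, f6⟩ := onb_inner (hon 0)
    have h0' : ⟪(⟪tst 0, tst 0⟫ • (kst 0 • nst 0) - ⟪kst 0 • nst 0, tst 0⟫ • tst 0 : EuclideanSpace ℝ (Fin 3)), nst 0⟫ = ⟪c • bst 0, nst 0⟫ := by rw [heq]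
    have f4' : ⟪nst 0, tst 0⟫ = 0 := by rw [real_inner_comm]; exact f4
    have f6' : ⟪bst 0, nst 0⟫ = 0 := by rw [real_inner_comm]; exact f6
    simp only [inner_sub_left, real_inner_smul_left, f1, f2, f4, f4', f6',
      mul_zero, zero_mul, one_mul, mul_one, sub_zero] at h0'
    exact (hkst 0).ne' h0'
  refine ⟨μ 0, hc0, hconst, fun u => ?_⟩
  have hbstf : bst = fun v => (μ 0)⁻¹ • (α v - β v) := by
    funext v
    rw [hαdef v, hconst v, add_sub_cancel_left, smul_smul, inv_mul_cancel₀ hc0, one_smul]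
  have hbstdiff : Differentiable ℝ bst := by
    rw [hbstf]; exact fun v => ((hα_d v).sub (hβdiff v)).const_smul ((μ 0)⁻¹)
  have hderivα : deriv α = fun v => tst v + (μ 0 * (-(rst v))) • nst v := by
    funext v
    have h1 : HasDerivAt β (tst v) v := hβ' v ▸ (hβdiff v).hasDerivAt
    have h2 : HasDerivAt bst ((-(rst v)) • nst v) v := hbst v ▸ (hbstdiff v).hasDerivAt
    have hαf : α = fun w => β w + μ 0 • bst w := by
      funext w; rw [hαdef w, hconst w]
    have H : HasDerivAt α (tst v + μ 0 • ((-(rst v)) • nst v)) v := by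
      rw [hαf]; exact h1.add (h2.const_smul (μ 0))
    rw [H.deriv, smul_smul]
  have hdbst_eq : deriv bst = fun v => (μ 0)⁻¹ • (deriv α v - tst v) := by
    funext v
    have h5 : HasDerivAt (fun w => α w - β w) (deriv α v - tst v) v :=
      ((hα_d v).hasDerivAt).sub (hβ' v ▸ (hβdiff v).hasDerivAt)
    have h6 := (h5.const_smul ((μ 0)⁻¹)).deriv
    rw [hbstf]
    exact h6
  have hdbst_d : DifferentiableAt ℝ (deriv bst) u := by
    rw [hdbst_eq]; exact ((hα'_d u).sub (htdiff u)).const_smul ((μ 0)⁻¹)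
  have hrst_eq : rst = fun v => -⟪deriv bst v, nst v⟫ := by
    funext v
    have e2 : ⟪nst v, nst v⟫ = 1 := (onb_inner (hon v)).2.1
    rw [hbst v, real_inner_smul_left, e2]
    ring
  have hrst_d : DifferentiableAt ℝ rst u := by
    rw [hrst_eq]; exact (hdbst_d.inner ℝ (hnstdiff u)).neg
  have hnstH : HasDerivAt nst ((-(kst u)) • tst u + rst u • bst u) u :=
    hnst u ▸ (hnstdiff u).hasDerivAt
  have htstH : HasDerivAt tst (kst u • nst u) u := htst u ▸ (htdiff u).hasDerivAt
  have hrstH : HasDerivAt (fun v => μ 0 * (-(rst v))) (μ 0 * (-(deriv rst u))) u :=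
    (hrst_d.hasDerivAt).neg.const_mul (μ 0)
  have H2 : HasDerivAt (deriv α)
      (kst u • nst u + ((μ 0 * (-(rst u))) • ((-(kst u)) • tst u + rst u • bst u)
        + (μ 0 * (-(deriv rst u))) • nst u)) u := by
    rw [hderivα]
    exact htstH.add (hrstH.smul hnstH)
  have hD2 := H2.deriv
  have hdαu : deriv α u = tst u + (μ 0 * (-(rst u))) • nst u := congrFun hderivα u
  obtain ⟨c, hc, heq⟩ := hpar u
  rw [double_cross] at heq
  have E := congrArg (fun x : EuclideanSpace ℝ (Fin 3) => ⟪x, nst u⟫) heq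
  rw [hD2, hdαu] at E
  obtain ⟨e1, e2, e3, e4, e5, e6⟩ := onb_inner (hon u)
  have e4' : ⟪nst u, tst u⟫ = 0 := by rw [real_inner_comm]; exact e4
  have e5' : ⟪bst u, tst u⟫ = 0 := by rw [real_inner_comm]; exact e5
  have e6' : ⟪bst u, nst u⟫ = 0 := by rw [real_inner_comm]; exact e6
  simp only [inner_add_left, inner_add_right, inner_sub_left, real_inner_smul_left,
    real_inner_smul_right, e1, e2, e3, e4, e4', e5, e5', e6, e6',
    mul_zero, zero_mul, mul_one, one_mul, add_zero, zero_add, neg_zero, mul_neg, neg_neg,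
    sub_zero] at E
  rw [div_mul_eq_mul_div, eq_div_iff hc0]
  linear_combination -E
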